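/- Let V, W be finite-dimensional inner product spaces and A, B ∈ Lin(V, W). If rank(A) > rank(B), then the operator norm of the Moore–Penrose pseudoinverse A† satisfies ‖A†‖ ≥ 1/‖A − B‖. -/

import Mathlib

open Module LinearMap Metric Filter Topology Polynomial

/-- Orthogonal projection onto a submodule, as an endomorphism. -/
noncomputable def orthProj {E : Type*} [NormedAddCommGroup E] [InnerProductSpace ℝ E]
    [FiniteDimensional ℝ E] (K : Submodule ℝ E) : E →L[ℝ] E :=
  K.subtypeL.comp (K.orthogonalProjectionOnto)

/-- `X` is the Moore–Penrose pseudoinverse of `A`: `A X = Proj_{im A}`,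
`X A = Proj_{im A*}`, together with the normalization `X Proj_{im A} = X`
(i.e. `X` vanishes on `(im A)ᗮ`), which pins `X` down uniquely. -/
def IsMP {V W : Type*} [NormedAddCommGroup V] [InnerProductSpace ℝ V] [FiniteDimensional ℝ V]
    [NormedAddCommGroup W] [InnerProductSpace ℝ W] [FiniteDimensional ℝ W]
    (A : V →L[ℝ] W) (X : W →L[ℝ] V) : Prop :=
  A ∘L X = orthProj (LinearMap.range (A : V →ₗ[ℝ] W)) ∧
  X ∘L A = orthProj (LinearMap.range ((ContinuousLinearMap.adjoint A : W →L[ℝ] V) : W →ₗ[ℝ] V)) ∧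
  X ∘L orthProj (LinearMap.range (A : V →ₗ[ℝ] W)) = X

/-!
Since `rank A* = rank A > rank B = dim V - dim ker B`, the subspaces `ker B` and `im A*` meet in
some `x ≠ 0`. On `im A*` the map `A† A` is the identity, so
`x = A† A x = A† (A - B) x`, whence `‖x‖ ≤ ‖A†‖ ‖A - B‖ ‖x‖`.
-/

theorem LinearMap.ker_inf_ne_bot_of_finrank_range_lt {K V W : Type*} [DivisionRing K]
    [AddCommGroup V] [Module K V] [FiniteDimensional K V] [AddCommGroup W] [Module K W]
    (B : V →ₗ[K] W) {U : Submodule K V} (h : finrank K (range B) < finrank K U) :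
    ker B ⊓ U ≠ ⊥ := by
  rw [← Submodule.one_le_finrank_iff]
  have h_sup_inf := Submodule.finrank_sup_add_finrank_inf_eq (ker B) U
  have h_sup_le := Submodule.finrank_le (ker B ⊔ U)
  have h_rank_nullity := B.finrank_range_add_finrank_ker
  omega

theorem ContinuousLinearMap.one_le_opNorm_mul_opNorm_sub {𝕜 E F : Type*}
    [NontriviallyNormedField 𝕜] [NormedAddCommGroup E] [NormedSpace 𝕜 E]
    [NormedAddCommGroup F] [NormedSpace 𝕜 F] (X : F →L[𝕜] E) (A B : E →L[𝕜] F) {x : E}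
    (hx : x ≠ 0) (hBx : B x = 0) (hXAx : X (A x) = x) : 1 ≤ ‖X‖ * ‖A - B‖ := by
  have h_bound : 1 * ‖x‖ ≤ ‖X‖ * ‖A - B‖ * ‖x‖ :=
    calc 1 * ‖x‖ = ‖X ((A - B) x)‖ := by rw [_root_.sub_apply, hBx, sub_zero, hXAx, one_mul]
      _ ≤ ‖X‖ * ‖(A - B) x‖ := X.le_opNorm _
      _ ≤ ‖X‖ * (‖A - B‖ * ‖x‖) := by gcongr; exact (A - B).le_opNorm x
      _ = ‖X‖ * ‖A - B‖ * ‖x‖ := (mul_assoc _ _ _).symm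
  exact le_of_mul_le_mul_right h_bound (norm_pos_iff.2 hx)

theorem ContinuousLinearMap.finrank_range_adjoint {E F : Type*}
    [NormedAddCommGroup E] [InnerProductSpace ℝ E] [FiniteDimensional ℝ E]
    [NormedAddCommGroup F] [InnerProductSpace ℝ F] [FiniteDimensional ℝ F] (A : E →L[ℝ] F) :
    finrank ℝ (range (adjoint A : F →ₗ[ℝ] E)) = finrank ℝ (range (A : E →ₗ[ℝ] F)) :=
  LinearMap.finrank_range_adjoint (A : E →ₗ[ℝ] F)

theorem IsMP.apply_apply_of_mem_range_adjoint {V W : Type*} [NormedAddCommGroup V]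
    [InnerProductSpace ℝ V] [FiniteDimensional ℝ V] [NormedAddCommGroup W]
    [InnerProductSpace ℝ W] [FiniteDimensional ℝ W] {A : V →L[ℝ] W} {X : W →L[ℝ] V}
    (hA : IsMP A X) {x : V}
    (hx : x ∈ range ((ContinuousLinearMap.adjoint A : W →L[ℝ] V) : W →ₗ[ℝ] V)) :
    X (A x) = x := by
  change (X ∘L A) x = x
  rw [hA.2.1]
  exact Submodule.starProjection_eq_self_iff.2 hx

/-- If `rank A > rank B` then `‖A†‖ ≥ 1 / ‖A − B‖`. -/
theorem pseudoinverse_norm_lower_bound_of_rank_gt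
    {V W : Type*} [NormedAddCommGroup V] [InnerProductSpace ℝ V] [FiniteDimensional ℝ V]
    [NormedAddCommGroup W] [InnerProductSpace ℝ W] [FiniteDimensional ℝ W]
    (A B : V →L[ℝ] W) (Adag : W →L[ℝ] V) (hA : IsMP A Adag)
    (h : finrank ℝ (LinearMap.range (B : V →ₗ[ℝ] W)) < finrank ℝ (LinearMap.range (A : V →ₗ[ℝ] W))) :
    1 / ‖A - B‖ ≤ ‖Adag‖ := by
  have h_meet := (B : V →ₗ[ℝ] W).ker_inf_ne_bot_of_finrank_range_lt
    (h.trans_eq (ContinuousLinearMap.finrank_range_adjoint A).symm)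
  obtain ⟨x, ⟨hBx, hx_range⟩, hx0⟩ := Submodule.exists_mem_ne_zero_of_ne_bot h_meet
  exact div_le_of_le_mul₀ (norm_nonneg _) (norm_nonneg _)
    (Adag.one_le_opNorm_mul_opNorm_sub A B hx0 hBx (hA.apply_apply_of_mem_range_adjoint hx_range))
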